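/- arXiv:2108.08908 — 8 statements merged into one kernel-verified Lean document; each statement's English description precedes it below -/
import Mathlib

section
/- Explicit relaxation parameter for IMEX Runge–Kutta methods with quadratic entropy: assume q_{n+1} ≠ q_n and set γ = 2·‖q_{n+1} − q_n‖⁻²·Δt·Σ_{i=1}^{s}⟨b_i f_i + b̃_i g_i, Q_i − q_n⟩. Then the relaxed solution q_{n+γ} = q_n + γ·Δt·Σ_{i=1}^{s}(b_i f_i + b̃_i g_i) satisfies the quadratic relaxation condition ½‖q_{n+γ}‖² − ½‖q_n‖² − γ·Δt·Σ_{i=1}^{s}⟨b_i f_i + b̃_i g_i, Q_i⟩ = 0. -/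
open scoped RealInnerProductSpace

/-- Explicit relaxation parameter for IMEX Runge--Kutta methods with quadratic entropy. -/
theorem relaxation_imex_explicit_gamma
    {V : Type*} [NormedAddCommGroup V] [InnerProductSpace ℝ V]
    (s : ℕ) (b btil : Fin s → ℝ) (f g Q : Fin s → V)
    (Δt : ℝ) (hΔt : 0 < Δt) (qn qn1 : V)
    (hqn1 : qn1 = qn + Δt • ∑ i, (b i • f i + btil i • g i))
    (hne : qn1 ≠ qn)
    (γ : ℝ)
    (hγ : γ = 2 * (‖qn1 - qn‖ ^ 2)⁻¹ *
      (Δt * ∑ i, ⟪b i • f i + btil i • g i, Q i - qn⟫))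
    (qγ : V) (hqγ : qγ = qn + (γ * Δt) • ∑ i, (b i • f i + btil i • g i)) :
    (1 / 2) * ‖qγ‖ ^ 2 - (1 / 2) * ‖qn‖ ^ 2
      - γ * Δt * ∑ i, ⟪b i • f i + btil i • g i, Q i⟫ = 0 := by
  set d : V := Δt • ∑ i, (b i • f i + btil i • g i) with hd
  have hsub : qn1 - qn = d := by rw [hqn1]; abel
  have hdne : d ≠ 0 := by
    intro h
    apply hne
    rw [hqn1, h, add_zero]
  have hnd : ‖d‖ ^ 2 ≠ 0 := pow_ne_zero _ (norm_ne_zero_iff.mpr hdne)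
  set S : ℝ := Δt * ∑ i, ⟪b i • f i + btil i • g i, Q i - qn⟫ with hS
  have hγ' : γ * ‖d‖ ^ 2 = 2 * S := by
    rw [hγ, hsub]; field_simp
  -- split the sum
  have hsplit : Δt * ∑ i, ⟪b i • f i + btil i • g i, Q i⟫ = S + ⟪d, qn⟫ := by
    have : ∀ i, (⟪b i • f i + btil i • g i, Q i⟫ : ℝ)
        = ⟪b i • f i + btil i • g i, Q i - qn⟫ + ⟪b i • f i + btil i • g i, qn⟫ := by
      intro i
      rw [← inner_add_right]
      congr 1
      abel
    rw [Finset.sum_congr rfl fun i _ => this i, Finset.sum_add_distrib, hS, mul_add]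
    congr 1
    rw [hd, real_inner_smul_left, sum_inner]
  have hqγ' : qγ = qn + γ • d := by
    rw [hqγ, hd, smul_smul]
  have hnorm : ‖qγ‖ ^ 2 = ‖qn‖ ^ 2 + 2 * (γ * ⟪qn, d⟫) + γ ^ 2 * ‖d‖ ^ 2 := by
    rw [hqγ', norm_add_sq_real, real_inner_smul_right, norm_smul, mul_pow,
      Real.norm_eq_abs, sq_abs]
  have hcomm : (⟪d, qn⟫ : ℝ) = ⟪qn, d⟫ := (real_inner_comm d qn).symm
  have hgoal : γ * Δt * ∑ i, ⟪b i • f i + btil i • g i, Q i⟫ = γ * (S + ⟪qn, d⟫) := by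
    rw [mul_assoc, hsplit, hcomm]
  rw [hgoal, hnorm]
  have h2 : γ ^ 2 * ‖d‖ ^ 2 = γ * (2 * S) := by rw [← hγ']; ring
  linarith
end

section
/- Explicit relaxation parameter for additive Runge–Kutta methods with equal weights and quadratic entropy: suppose b_i = b̃_i for all i and q_{n+1} ≠ q_n, and set γ = 2·‖q_{n+1} − q_n‖⁻²·Δt·Σ_{i=1}^{s} b_i ⟨R_i, Q_i − q_n⟩ where R_i = f_i + g_i. Then the relaxed solution q_{n+γ} = q_n + γ·Δt·Σ_{i=1}^{s} b_i R_i satisfies ½‖q_{n+γ}‖² − ½‖q_n‖² − γ·Δt·Σ_{i=1}^{s} b_i ⟨R_i, Q_i⟩ = 0. -/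
open scoped RealInnerProductSpace

/-- Explicit relaxation parameter for additive Runge--Kutta methods with equal weights
and quadratic entropy. -/
theorem relaxation_ark_explicit_gamma
    {V : Type*} [NormedAddCommGroup V] [InnerProductSpace ℝ V]
    (s : ℕ) (b btil : Fin s → ℝ) (f g Q : Fin s → V)
    (Δt : ℝ) (hΔt : 0 < Δt) (qn qn1 : V)
    (hweights : ∀ i, btil i = b i)
    (hqn1 : qn1 = qn + Δt • ∑ i, (b i • f i + btil i • g i))
    (hne : qn1 ≠ qn)
    (γ : ℝ)
    (hγ : γ = 2 * (‖qn1 - qn‖ ^ 2)⁻¹ *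
      (Δt * ∑ i, b i * ⟪f i + g i, Q i - qn⟫))
    (qγ : V) (hqγ : qγ = qn + (γ * Δt) • ∑ i, b i • (f i + g i)) :
    (1 / 2) * ‖qγ‖ ^ 2 - (1 / 2) * ‖qn‖ ^ 2
      - γ * Δt * ∑ i, b i * ⟪f i + g i, Q i⟫ = 0 := by
  set d : V := Δt • ∑ i, b i • (f i + g i) with hdd
  have hd : qn1 - qn = d := by
    rw [hqn1, hdd]
    simp only [hweights, smul_add, add_sub_cancel_left]
  have hqγ' : qγ = qn + γ • d := by
    rw [hqγ, mul_smul]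
  have hdne : d ≠ 0 := by
    rw [← hd, sub_ne_zero]; exact hne
  have hdn : ‖d‖ ^ 2 ≠ 0 := pow_ne_zero _ (norm_ne_zero_iff.mpr hdne)
  -- inner of d with qn
  have hT0 : ⟪qn, d⟫ = Δt * ∑ i, b i * ⟪f i + g i, qn⟫ := by
    rw [hdd, real_inner_smul_right, inner_sum]
    congr 1
    refine Finset.sum_congr rfl fun i _ => ?_
    rw [real_inner_smul_right, real_inner_comm]
  have hγ' : γ * ‖d‖ ^ 2 = 2 * (Δt * ∑ i, b i * ⟪f i + g i, Q i - qn⟫) := by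
    rw [hγ, hd]
    field_simp
  have hS : (∑ i, b i * ⟪f i + g i, Q i⟫)
      = (∑ i, b i * ⟪f i + g i, Q i - qn⟫) + ∑ i, b i * ⟪f i + g i, qn⟫ := by
    rw [← Finset.sum_add_distrib]
    refine Finset.sum_congr rfl fun i _ => ?_
    rw [inner_sub_right]; ring
  have hnorm : ‖qγ‖ ^ 2 = ‖qn‖ ^ 2 + 2 * (γ * ⟪qn, d⟫) + γ ^ 2 * ‖d‖ ^ 2 := by
    rw [hqγ', @norm_add_sq_real, real_inner_smul_right, norm_smul]
    simp [mul_pow]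
  rw [hnorm, hS, hT0]
  have : γ ^ 2 * ‖d‖ ^ 2 = γ * (2 * (Δt * ∑ i, b i * ⟪f i + g i, Q i - qn⟫)) := by
    rw [← hγ']; ring
  rw [this]
  ring
end

section
/- Explicit relaxation parameter for the two-level multirate Runge–Kutta (MRK2) method with quadratic invariant: assume the solution is dynamic, i.e. (q_{n+1}^{1},…,q_{n+1}^{4}) ≠ (q_n^{1},…,q_n^{4}), and set γ = 2·(Σ_{z=1}^{4} ‖q_{n+1}^{z} − q_n^{z}‖²)⁻¹·Δt·Σ_{z=1}^{4} Σ_{i=1}^{s} b_i^{z} ⟨R_i^{z}, Q_i^{z} − q_n^{z}⟩. Then the relaxed solution satisfies Σ_{z=1}^{4} ‖q_{n+γ}^{z}‖² − Σ_{z=1}^{4} ‖q_n^{z}‖² − 2γ·Δt·Σ_{z=1}^{4} Σ_{i=1}^{s} b_i^{z} ⟨R_i^{z}, Q_i^{z}⟩ = 0. -/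
open scoped RealInnerProductSpace

/-- Explicit relaxation parameter for the two-level multirate Runge--Kutta (MRK2)
method with the quadratic invariant. -/
theorem relaxation_mrk2_two_level_explicit_gamma
    {V : Type*} [NormedAddCommGroup V] [InnerProductSpace ℝ V]
    (s : ℕ) (b : Fin 4 → Fin s → ℝ) (R Q : Fin 4 → Fin s → V)
    (Δt : ℝ) (hΔt : 0 < Δt)
    (qn qn1 : Fin 4 → V)
    (hqn1 : ∀ z, qn1 z = qn z + Δt • ∑ i, b z i • R z i)
    (hne : qn1 ≠ qn)
    (γ : ℝ)
    (hγ : γ = 2 * (∑ z, ‖qn1 z - qn z‖ ^ 2)⁻¹ *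
      (Δt * ∑ z, ∑ i, b z i * ⟪R z i, Q z i - qn z⟫))
    (qγ : Fin 4 → V)
    (hqγ : ∀ z, qγ z = qn z + (γ * Δt) • ∑ i, b z i • R z i) :
    (∑ z, ‖qγ z‖ ^ 2) - (∑ z, ‖qn z‖ ^ 2)
      - 2 * γ * Δt * ∑ z, ∑ i, b z i * ⟪R z i, Q z i⟫ = 0 := by
  set d : Fin 4 → V := fun z => Δt • ∑ i, b z i • R z i with hd
  have hdiff : ∀ z, qn1 z - qn z = d z := by
    intro z; rw [hqn1]; abel
  -- S ≠ 0
  have hSne : (∑ z, ‖qn1 z - qn z‖ ^ 2) ≠ 0 := by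
    obtain ⟨z, hz⟩ := Function.ne_iff.mp hne
    have hpos : (0:ℝ) < ∑ z, ‖qn1 z - qn z‖ ^ 2 := by
      apply Finset.sum_pos' (fun i _ => by positivity)
      exact ⟨z, Finset.mem_univ z,
        pow_pos (norm_pos_iff.mpr (sub_ne_zero.mpr hz)) 2⟩
    exact ne_of_gt hpos
  -- inner product of qn with d
  have hB : ∀ z, ⟪qn z, d z⟫ = Δt * ∑ i, b z i * ⟪R z i, qn z⟫ := by
    intro z
    rw [hd, real_inner_smul_right, inner_sum]
    congr 1
    refine Finset.sum_congr rfl fun i _ => ?_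
    rw [real_inner_smul_right, real_inner_comm]
  -- expand the inner product with Q - qn
  have hC : (Δt * ∑ z, ∑ i, b z i * ⟪R z i, Q z i - qn z⟫)
      = Δt * (∑ z, ∑ i, b z i * ⟪R z i, Q z i⟫) - ∑ z, ⟪qn z, d z⟫ := by
    rw [Finset.mul_sum, Finset.mul_sum, ← Finset.sum_sub_distrib]
    refine Finset.sum_congr rfl fun z _ => ?_
    rw [hB]
    simp only [inner_sub_right, mul_sub, Finset.sum_sub_distrib]
  -- γ * S = 2 * (A - B)
  have hγS : γ * (∑ z, ‖qn1 z - qn z‖ ^ 2)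
      = 2 * (Δt * (∑ z, ∑ i, b z i * ⟪R z i, Q z i⟫) - ∑ z, ⟪qn z, d z⟫) := by
    rw [hγ, hC]; field_simp
  -- expand ‖qγ z‖²
  have hexp : ∀ z, ‖qγ z‖ ^ 2
      = ‖qn z‖ ^ 2 + 2 * (γ * ⟪qn z, d z⟫) + γ ^ 2 * ‖d z‖ ^ 2 := by
    intro z
    have : qγ z = qn z + γ • d z := by
      rw [hqγ, hd, mul_smul]
    rw [this, norm_add_sq_real, real_inner_smul_right, norm_smul, mul_pow]
    simp only [Real.norm_eq_abs, sq_abs]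
    try ring
  have hSd : (∑ z, ‖qn1 z - qn z‖ ^ 2) = ∑ z, ‖d z‖ ^ 2 := by
    refine Finset.sum_congr rfl fun z _ => by rw [hdiff]
  rw [hSd] at hγS
  simp only [hexp, Finset.sum_add_distrib, ← Finset.mul_sum]
  linear_combination γ * hγS
end

section
/- Quadratic-invariant identity for the two-level multirate Runge–Kutta (MRK2) method: for every relaxation parameter γ ∈ ℝ, Σ_{z=1}^{4} ‖q_{n+γ}^{z}‖² − Σ_{z=1}^{4} ‖q_n^{z}‖² − 2γ·Δt·Σ_{z=1}^{4} Σ_{i=1}^{s} b_i^{z} ⟨R_i^{z}, Q_i^{z}⟩ = γ²·Σ_{z=1}^{4} ‖q_{n+1}^{z} − q_n^{z}‖² − 2γ·Δt·Σ_{z=1}^{4} Σ_{i=1}^{s} b_i^{z} ⟨R_i^{z}, Q_i^{z} − q_n^{z}⟩. -/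
open scoped RealInnerProductSpace

/-- Quadratic-invariant identity for the two-level multirate Runge--Kutta (MRK2)
method, valid for every relaxation parameter `γ`. -/
theorem relaxation_mrk2_two_level_quadratic_identity
    {V : Type*} [NormedAddCommGroup V] [InnerProductSpace ℝ V]
    (s : ℕ) (b : Fin 4 → Fin s → ℝ) (R Q : Fin 4 → Fin s → V)
    (Δt : ℝ) (hΔt : 0 < Δt)
    (qn qn1 : Fin 4 → V)
    (hqn1 : ∀ z, qn1 z = qn z + Δt • ∑ i, b z i • R z i) :
    ∀ γ : ℝ, ∀ qγ : Fin 4 → V,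
      (∀ z, qγ z = qn z + (γ * Δt) • ∑ i, b z i • R z i) →
      (∑ z, ‖qγ z‖ ^ 2) - (∑ z, ‖qn z‖ ^ 2)
        - 2 * γ * Δt * ∑ z, ∑ i, b z i * ⟪R z i, Q z i⟫
      = γ ^ 2 * ∑ z, ‖qn1 z - qn z‖ ^ 2
        - 2 * γ * Δt * ∑ z, ∑ i, b z i * ⟪R z i, Q z i - qn z⟫ := by
  intro γ qγ hqγ
  have key : ∀ z, ‖qγ z‖ ^ 2 - ‖qn z‖ ^ 2 - 2 * γ * Δt * ∑ i, b z i * ⟪R z i, Q z i⟫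
      = γ ^ 2 * ‖qn1 z - qn z‖ ^ 2 - 2 * γ * Δt * ∑ i, b z i * ⟪R z i, Q z i - qn z⟫ := by
    intro z
    set d := ∑ i, b z i • R z i with hd
    have h1 : qn1 z - qn z = Δt • d := by rw [hqn1 z]; abel
    have h2 : ‖qγ z‖ ^ 2 = ‖qn z‖ ^ 2 + 2 * (γ * Δt) * ⟪qn z, d⟫ + (γ * Δt) ^ 2 * ‖d‖ ^ 2 := by
      rw [hqγ z, norm_add_sq_real, real_inner_smul_right, norm_smul, mul_pow, Real.norm_eq_abs, sq_abs]
      ring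
    have h3 : ∑ i, b z i * ⟪R z i, Q z i - qn z⟫
        = (∑ i, b z i * ⟪R z i, Q z i⟫) - ⟪qn z, d⟫ := by
      have : ⟪qn z, d⟫ = ∑ i, b z i * ⟪R z i, qn z⟫ := by
        rw [real_inner_comm, hd, sum_inner]
        exact Finset.sum_congr rfl fun i _ => by rw [real_inner_smul_left]
      rw [this, ← Finset.sum_sub_distrib]
      exact Finset.sum_congr rfl fun i _ => by rw [inner_sub_right]; ring
    have h4 : ‖Δt • d‖ ^ 2 = Δt ^ 2 * ‖d‖ ^ 2 := by
      rw [norm_smul, mul_pow, Real.norm_eq_abs, sq_abs]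
    rw [h1, h2, h3, h4]
    ring
  calc (∑ z, ‖qγ z‖ ^ 2) - (∑ z, ‖qn z‖ ^ 2)
        - 2 * γ * Δt * ∑ z, ∑ i, b z i * ⟪R z i, Q z i⟫
      = ∑ z, (‖qγ z‖ ^ 2 - ‖qn z‖ ^ 2 - 2 * γ * Δt * ∑ i, b z i * ⟪R z i, Q z i⟫) := by
        rw [Finset.sum_sub_distrib, Finset.sum_sub_distrib, Finset.mul_sum]
    _ = ∑ z, (γ ^ 2 * ‖qn1 z - qn z‖ ^ 2 - 2 * γ * Δt * ∑ i, b z i * ⟪R z i, Q z i - qn z⟫) :=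
        Finset.sum_congr rfl fun z _ => key z
    _ = γ ^ 2 * ∑ z, ‖qn1 z - qn z‖ ^ 2
        - 2 * γ * Δt * ∑ z, ∑ i, b z i * ⟪R z i, Q z i - qn z⟫ := by
        rw [Finset.sum_sub_distrib, Finset.mul_sum, Finset.mul_sum]
end

section
/- Explicit relaxation parameter for the multilevel multirate Runge–Kutta method with quadratic invariant: assume (q_{n+1}^{B,z})_{B,z} ≠ (q_n^{B,z})_{B,z}, and set γ = 2·(Σ_{B=1}^{N_B} Σ_{z=1}^{3} ‖q_{n+1}^{B,z} − q_n^{B,z}‖²)⁻¹·Σ_{B=1}^{N_B} Δt_B Σ_{z=1}^{3} Σ_{r=1}^{m_B} Σ_{i=1}^{s_B} b_i^{z} ⟨R_{B,z,r,i}, Q_{B,z,r,i} − q_n^{B,z}⟩. Then the relaxed solution satisfies Σ_{B,z} ‖q_{n+γ}^{B,z}‖² − Σ_{B,z} ‖q_n^{B,z}‖² − 2γ·Σ_{B=1}^{N_B} Δt_B Σ_{z=1}^{3} Σ_{r=1}^{m_B} Σ_{i=1}^{s_B} b_i^{z} ⟨R_{B,z,r,i}, Q_{B,z,r,i}⟩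 = 0. -/
open scoped RealInnerProductSpace

/-- Explicit relaxation parameter for the multilevel multirate Runge--Kutta method
with the quadratic invariant. -/
theorem relaxation_mrk2_multilevel_explicit_gamma
    {V : Type*} [NormedAddCommGroup V] [InnerProductSpace ℝ V]
    (NB : ℕ) (ΔtB : Fin NB → ℝ) (hΔtB : ∀ B, 0 < ΔtB B)
    (m : Fin NB → ℕ) (hm : ∀ B, 1 ≤ m B)
    (sB : Fin NB → ℕ)
    (b : (B : Fin NB) → Fin 3 → Fin (sB B) → ℝ)
    (R Q : (B : Fin NB) → Fin 3 → Fin (m B) → Fin (sB B) → V)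
    (qn qn1 : Fin NB → Fin 3 → V)
    (hqn1 : ∀ B z, qn1 B z = qn B z + (ΔtB B) • ∑ r, ∑ i, b B z i • R B z r i)
    (hne : qn1 ≠ qn)
    (γ : ℝ)
    (hγ : γ = 2 * (∑ B, ∑ z, ‖qn1 B z - qn B z‖ ^ 2)⁻¹ *
      ∑ B, ΔtB B * ∑ z, ∑ r, ∑ i, b B z i * ⟪R B z r i, Q B z r i - qn B z⟫)
    (qγ : Fin NB → Fin 3 → V)
    (hqγ : ∀ B z, qγ B z = qn B z + (γ * ΔtB B) • ∑ r, ∑ i, b B z i • R B z r i) :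
    (∑ B, ∑ z, ‖qγ B z‖ ^ 2) - (∑ B, ∑ z, ‖qn B z‖ ^ 2)
      - 2 * γ * ∑ B, ΔtB B * ∑ z, ∑ r, ∑ i, b B z i * ⟪R B z r i, Q B z r i⟫ = 0 := by
  classical
  set A : (B : Fin NB) → Fin 3 → V := fun B z => ∑ r, ∑ i, b B z i • R B z r i with hAdef
  have hd : ∀ B z, qn1 B z - qn B z = ΔtB B • A B z := by
    intro B z; rw [hqn1]; abel
  have hS : (∑ B, ∑ z, ‖qn1 B z - qn B z‖ ^ 2) ≠ 0 := by
    intro h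
    apply hne
    funext B z
    have h1 := (Finset.sum_eq_zero_iff_of_nonneg (by intro B _; positivity)).mp h B
      (Finset.mem_univ B)
    have h2 := (Finset.sum_eq_zero_iff_of_nonneg (by intro z _; positivity)).mp h1 z
      (Finset.mem_univ z)
    have h3 : ‖qn1 B z - qn B z‖ = 0 := by
      have := sq_eq_zero_iff.mp h2
      exact this
    rw [norm_eq_zero, sub_eq_zero] at h3
    exact h3
  have key : γ * (∑ B, ∑ z, ‖qn1 B z - qn B z‖ ^ 2)
      = 2 * ∑ B, ΔtB B * ∑ z, ∑ r, ∑ i, b B z i * ⟪R B z r i, Q B z r i - qn B z⟫ := by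
    rw [hγ]; field_simp
  have hd2 : ∀ B z, ‖qn1 B z - qn B z‖ ^ 2 = (ΔtB B) ^ 2 * ‖A B z‖ ^ 2 := by
    intro B z
    rw [hd, norm_smul, mul_pow, Real.norm_eq_abs, sq_abs]
  have hinner : ∀ B z, (∑ r, ∑ i, b B z i * ⟪R B z r i, qn B z⟫) = ⟪A B z, qn B z⟫ := by
    intro B z
    simp [hAdef, sum_inner, real_inner_smul_left]
  have hsplit : ∀ B z, (∑ r, ∑ i, b B z i * ⟪R B z r i, Q B z r i - qn B z⟫)
      = (∑ r, ∑ i, b B z i * ⟪R B z r i, Q B z r i⟫) - ⟪A B z, qn B z⟫ := by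
    intro B z
    rw [← hinner, ← Finset.sum_sub_distrib]
    congr 1; funext r
    rw [← Finset.sum_sub_distrib]
    congr 1; funext i
    rw [inner_sub_right]; ring
  have hnorm : ∀ B z, ‖qγ B z‖ ^ 2
      = ‖qn B z‖ ^ 2 + 2 * γ * ΔtB B * ⟪A B z, qn B z⟫
        + γ ^ 2 * (ΔtB B) ^ 2 * ‖A B z‖ ^ 2 := by
    intro B z
    rw [hqγ]
    rw [norm_add_sq_real, norm_smul, real_inner_smul_right, real_inner_comm]
    rw [mul_pow, Real.norm_eq_abs, sq_abs]
    ring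
  set a : Fin NB → Fin 3 → ℝ := fun B z => (ΔtB B) ^ 2 * ‖A B z‖ ^ 2 with ha
  set p : Fin NB → Fin 3 → ℝ := fun B z => ΔtB B * ⟪A B z, qn B z⟫ with hp
  set c : Fin NB → Fin 3 → ℝ :=
    fun B z => ΔtB B * ∑ r, ∑ i, b B z i * ⟪R B z r i, Q B z r i⟫ with hc
  have key2 : γ * (∑ B, ∑ z, a B z) = 2 * (∑ B, ∑ z, c B z) - 2 * (∑ B, ∑ z, p B z) := by
    have l1 : (∑ B, ∑ z, ‖qn1 B z - qn B z‖ ^ 2) = ∑ B, ∑ z, a B z :=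
      Finset.sum_congr rfl fun B _ => Finset.sum_congr rfl fun z _ => hd2 B z
    have l2 : (∑ B, ΔtB B * ∑ z, ∑ r, ∑ i, b B z i * ⟪R B z r i, Q B z r i - qn B z⟫)
        = (∑ B, ∑ z, c B z) - ∑ B, ∑ z, p B z := by
      rw [← Finset.sum_sub_distrib]
      refine Finset.sum_congr rfl fun B _ => ?_
      rw [← Finset.sum_sub_distrib]
      have : (∑ z, ∑ r, ∑ i, b B z i * ⟪R B z r i, Q B z r i - qn B z⟫)
          = ∑ z, ((∑ r, ∑ i, b B z i * ⟪R B z r i, Q B z r i⟫) - ⟪A B z, qn B z⟫) :=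
        Finset.sum_congr rfl fun z _ => hsplit B z
      rw [this, Finset.mul_sum]
      refine Finset.sum_congr rfl fun z _ => ?_
      simp only [hc, hp]
      ring
    rw [l1, l2] at key
    linear_combination key
  have e1 : (∑ B, ∑ z, ‖qγ B z‖ ^ 2)
      = (∑ B, ∑ z, ‖qn B z‖ ^ 2) + 2 * γ * (∑ B, ∑ z, p B z)
        + γ ^ 2 * (∑ B, ∑ z, a B z) := by
    rw [Finset.mul_sum, Finset.mul_sum, ← Finset.sum_add_distrib, ← Finset.sum_add_distrib]
    refine Finset.sum_congr rfl fun B _ => ?_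
    rw [Finset.mul_sum, Finset.mul_sum, ← Finset.sum_add_distrib, ← Finset.sum_add_distrib]
    refine Finset.sum_congr rfl fun z _ => ?_
    rw [hnorm]
    simp only [ha, hp]
    ring
  have e2 : (∑ B, ΔtB B * ∑ z, ∑ r, ∑ i, b B z i * ⟪R B z r i, Q B z r i⟫)
      = ∑ B, ∑ z, c B z :=
    Finset.sum_congr rfl fun B _ => by rw [Finset.mul_sum]
  rw [e1, e2]
  linear_combination γ * key2
end

section
/- Quadratic-invariant identity for the multilevel multirate Runge–Kutta method: for every relaxation parameter γ ∈ ℝ, Σ_{B,z} ‖q_{n+γ}^{B,z}‖² − Σ_{B,z} ‖q_n^{B,z}‖² − 2γ·Σ_{B=1}^{N_B} Δt_B Σ_{z=1}^{3} Σ_{r=1}^{m_B} Σ_{i=1}^{s_B} b_i^{z} ⟨R_{B,z,r,i}, Q_{B,z,r,i}⟩ = γ²·Σ_{B,z} ‖q_{n+1}^{B,z} − q_n^{B,z}‖² − 2γ·Σ_{B=1}^{N_B} Δt_B Σ_{z=1}^{3} Σ_{r=1}^{m_B} Σ_{i=1}^{s_B} b_i^{z} ⟨R_{B,z,r,i}, Q_{B,z,r,i}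 − q_n^{B,z}⟩. -/
open scoped RealInnerProductSpace

private lemma key_norm_identity {V : Type*} [NormedAddCommGroup V] [InnerProductSpace ℝ V]
    (q D : V) (γ : ℝ) :
    ‖q + γ • D‖ ^ 2 - ‖q‖ ^ 2 = γ ^ 2 * ‖D‖ ^ 2 + 2 * γ * ⟪D, q⟫ := by
  rw [@norm_add_sq_real, real_inner_smul_right, norm_smul, mul_pow]
  have : ⟪q, D⟫ = ⟪D, q⟫ := (real_inner_comm q D).symm
  rw [this]
  simp [Real.norm_eq_abs, sq_abs]
  ring

/-- Quadratic-invariant identity for the multilevel multirate Runge--Kutta method,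
valid for every relaxation parameter `γ`. -/
theorem relaxation_mrk2_multilevel_quadratic_identity
    {V : Type*} [NormedAddCommGroup V] [InnerProductSpace ℝ V]
    (NB : ℕ) (ΔtB : Fin NB → ℝ) (hΔtB : ∀ B, 0 < ΔtB B)
    (m : Fin NB → ℕ) (hm : ∀ B, 1 ≤ m B)
    (sB : Fin NB → ℕ)
    (b : (B : Fin NB) → Fin 3 → Fin (sB B) → ℝ)
    (R Q : (B : Fin NB) → Fin 3 → Fin (m B) → Fin (sB B) → V)
    (qn qn1 : Fin NB → Fin 3 → V)
    (hqn1 : ∀ B z, qn1 B z = qn B z + (ΔtB B) • ∑ r, ∑ i, b B z i • R B z r i) :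
    ∀ γ : ℝ, ∀ qγ : Fin NB → Fin 3 → V,
      (∀ B z, qγ B z = qn B z + (γ * ΔtB B) • ∑ r, ∑ i, b B z i • R B z r i) →
      (∑ B, ∑ z, ‖qγ B z‖ ^ 2) - (∑ B, ∑ z, ‖qn B z‖ ^ 2)
        - 2 * γ * ∑ B, ΔtB B * ∑ z, ∑ r, ∑ i, b B z i * ⟪R B z r i, Q B z r i⟫
      = γ ^ 2 * (∑ B, ∑ z, ‖qn1 B z - qn B z‖ ^ 2)
        - 2 * γ * ∑ B, ΔtB B * ∑ z, ∑ r, ∑ i, b B z i * ⟪R B z r i, Q B z r i - qn B z⟫ := by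
  intro γ qγ hqγ
  -- pointwise identity
  have hpt : ∀ B z,
      ‖qγ B z‖ ^ 2 - ‖qn B z‖ ^ 2
        = γ ^ 2 * ‖qn1 B z - qn B z‖ ^ 2
          + 2 * γ * (ΔtB B * ∑ r, ∑ i, b B z i * ⟪R B z r i, qn B z⟫) := by
    intro B z
    have hD : qn1 B z - qn B z = (ΔtB B) • ∑ r, ∑ i, b B z i • R B z r i := by
      rw [hqn1]; abel
    have hq : qγ B z = qn B z + γ • ((ΔtB B) • ∑ r, ∑ i, b B z i • R B z r i) := by
      rw [hqγ, smul_smul]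
    have hinner : ⟪(ΔtB B) • ∑ r, ∑ i, b B z i • R B z r i, qn B z⟫
        = ΔtB B * ∑ r, ∑ i, b B z i * ⟪R B z r i, qn B z⟫ := by
      rw [real_inner_smul_left]
      congr 1
      rw [sum_inner]
      refine Finset.sum_congr rfl fun r _ => ?_
      rw [sum_inner]
      exact Finset.sum_congr rfl fun i _ => real_inner_smul_left _ _ _
    rw [hq, hD, key_norm_identity, hinner]
  have hsum :
      (∑ B, ∑ z, ‖qγ B z‖ ^ 2) - (∑ B, ∑ z, ‖qn B z‖ ^ 2)
        = γ ^ 2 * (∑ B, ∑ z, ‖qn1 B z - qn B z‖ ^ 2)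
          + 2 * γ * ∑ B, ΔtB B * ∑ z, ∑ r, ∑ i, b B z i * ⟪R B z r i, qn B z⟫ := by
    rw [← Finset.sum_sub_distrib]
    simp only [← Finset.sum_sub_distrib, hpt, Finset.sum_add_distrib, Finset.mul_sum]
  have hsplit : ∀ B, ΔtB B * ∑ z, ∑ r, ∑ i, b B z i * ⟪R B z r i, Q B z r i - qn B z⟫
      = ΔtB B * ∑ z, ∑ r, ∑ i, b B z i * ⟪R B z r i, Q B z r i⟫
        - ΔtB B * ∑ z, ∑ r, ∑ i, b B z i * ⟪R B z r i, qn B z⟫ := by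
    intro B
    rw [← mul_sub, ← Finset.sum_sub_distrib]
    congr 1
    refine Finset.sum_congr rfl fun z _ => ?_
    rw [← Finset.sum_sub_distrib]
    refine Finset.sum_congr rfl fun r _ => ?_
    rw [← Finset.sum_sub_distrib]
    refine Finset.sum_congr rfl fun i _ => ?_
    rw [inner_sub_right, mul_sub]
  simp only [hsplit, Finset.sum_sub_distrib]
  linarith [hsum]
end

section
/- The Lax–Friedrichs flux for the Burgers equation is entropy dissipative: for all real numbers a and b, setting τ = max(|a|, |b|), the flux f̂_ES(a,b) = (a² + b²)/4 + (τ/2)·(a − b) satisfies (b − a)·f̂_ES(a,b) ≤ b³/6 − a³/6; that is, the jump in the entropy variable times the flux is bounded above by the jump in the entropy potential ψ(q) = q³/6. -/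
/-- The Lax--Friedrichs flux for the Burgers equation is entropy dissipative:
with `τ = max (|a|, |b|)`, the jump in the entropy variable times the flux
`f̂_ES(a,b) = (a² + b²)/4 + (τ/2)(a - b)` is bounded above by the jump in the
entropy potential `ψ(q) = q³/6`. -/
theorem burgers_lax_friedrichs_flux_entropy_stable (a b : ℝ) :
    (b - a) * ((a ^ 2 + b ^ 2) / 4 + (max |a| |b| / 2) * (a - b))
      ≤ b ^ 3 / 6 - a ^ 3 / 6 := by
  have h1 : |a| ≤ max |a| |b| := le_max_left _ _
  have h2 : |b| ≤ max |a| |b| := le_max_right _ _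
  nlinarith [le_abs_self a, neg_abs_le a, le_abs_self b, neg_abs_le b,
    abs_nonneg a, abs_nonneg b, sq_nonneg (b - a)]
end

section
/- Explicit relaxation parameter for explicit relaxation Runge–Kutta methods with quadratic entropy: consider a single-partition Runge–Kutta step q_{n+1} = q_n + Δt·Σ_{i=1}^{s} b_i R_i with q_{n+1} ≠ q_n, and set γ = 2·‖q_{n+1} − q_n‖⁻²·Δt·Σ_{i=1}^{s} b_i ⟨R_i, Q_i − q_n⟩. Then the relaxed solution q_{n+γ} = q_n + γ·Δt·Σ_{i=1}^{s} b_i R_i satisfies ½‖q_{n+γ}‖² − ½‖q_n‖² − γ·Δt·Σ_{i=1}^{s} b_i ⟨R_i, Q_i⟩ = 0; in particular, if additionally ⟨R_i, Q_i⟩ = 0 for all i, then ‖q_{n+γ}‖ = ‖q_n‖. -/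
open scoped RealInnerProductSpace

/-- Explicit relaxation parameter for explicit relaxation Runge--Kutta methods with
quadratic entropy; in particular, if each stage is entropy conservative, the norm of
the solution is preserved. -/
theorem relaxation_rk_explicit_gamma
    {V : Type*} [NormedAddCommGroup V] [InnerProductSpace ℝ V]
    (s : ℕ) (b : Fin s → ℝ) (R Q : Fin s → V)
    (Δt : ℝ) (hΔt : 0 < Δt) (qn qn1 : V)
    (hqn1 : qn1 = qn + Δt • ∑ i, b i • R i)
    (hne : qn1 ≠ qn)
    (γ : ℝ)
    (hγ : γ = 2 * (‖qn1 - qn‖ ^ 2)⁻¹ * (Δt * ∑ i, b i * ⟪R i, Q i - qn⟫))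
    (qγ : V) (hqγ : qγ = qn + (γ * Δt) • ∑ i, b i • R i) :
    (1 / 2) * ‖qγ‖ ^ 2 - (1 / 2) * ‖qn‖ ^ 2 - γ * Δt * ∑ i, b i * ⟪R i, Q i⟫ = 0 ∧
      ((∀ i, ⟪R i, Q i⟫ = 0) → ‖qγ‖ = ‖qn‖) := by
  set S : V := ∑ i, b i • R i with hS
  have hΔ : Δt ≠ 0 := ne_of_gt hΔt
  have hSne : S ≠ 0 := by
    intro h
    exact hne (by rw [hqn1, h, smul_zero, add_zero])
  have hNS : ‖S‖ ≠ 0 := norm_ne_zero_iff.mpr hSne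
  have hqnS : ⟪qn, S⟫ = ∑ i, b i * ⟪R i, qn⟫ := by
    rw [real_inner_comm, hS, sum_inner]
    simp [real_inner_smul_left]
  have hsub : ∑ i, b i * ⟪R i, Q i - qn⟫
      = (∑ i, b i * ⟪R i, Q i⟫) - ∑ i, b i * ⟪R i, qn⟫ := by
    rw [← Finset.sum_sub_distrib]
    refine Finset.sum_congr rfl fun i _ => ?_
    rw [inner_sub_right]; ring
  have hnq : ‖qn1 - qn‖ ^ 2 = Δt ^ 2 * ‖S‖ ^ 2 := by
    rw [hqn1, add_sub_cancel_left, norm_smul, Real.norm_eq_abs, mul_pow, sq_abs]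
  have hqγ2 : ‖qγ‖ ^ 2 = ‖qn‖ ^ 2 + 2 * (γ * Δt) * ⟪qn, S⟫ + (γ * Δt) ^ 2 * ‖S‖ ^ 2 := by
    rw [hqγ, norm_add_sq_real, real_inner_smul_right, norm_smul, Real.norm_eq_abs,
      mul_pow, sq_abs]
    ring
  have hγ' : γ * (Δt ^ 2 * ‖S‖ ^ 2)
      = 2 * (Δt * ((∑ i, b i * ⟪R i, Q i⟫) - ∑ i, b i * ⟪R i, qn⟫)) := by
    rw [hγ, hsub, hnq]
    field_simp
  have key : (1 / 2) * ‖qγ‖ ^ 2 - (1 / 2) * ‖qn‖ ^ 2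
      - γ * Δt * ∑ i, b i * ⟪R i, Q i⟫ = 0 := by
    rw [hqγ2, hqnS]
    linear_combination (γ / 2) * hγ'
  refine ⟨key, fun h => ?_⟩
  have hz : ∑ i, b i * ⟪R i, Q i⟫ = 0 := by simp [h]
  rw [hz, mul_zero, sub_zero, sub_eq_zero] at key
  have heq : ‖qγ‖ ^ 2 = ‖qn‖ ^ 2 := by linarith
  rw [← Real.sqrt_sq (norm_nonneg qγ), ← Real.sqrt_sq (norm_nonneg qn), heq]
end
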